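/- arXiv:1006.3033 — 3 statements merged into one kernel-verified Lean document; each statement's English description precedes it below -/
import Mathlib

section
/- Chain rule for Wirtinger derivatives on a complex Hilbert space: let H be a complex Hilbert space, T : H → ℂ Fréchet differentiable over ℝ at c ∈ H, and S : ℂ → ℂ Fréchet differentiable over ℝ at T(c). Define the scalar Wirtinger derivatives of S at p by ∂S/∂z (p) := (fderiv ℝ S p (1) − i·fderiv ℝ S p (i))/2 and ∂S/∂z* (p) := (fderiv ℝ S p (1) + i·fderiv ℝ S p (i))/2. Then S ∘ T is Fréchet differentiable over ℝ at c and, with Lin D (h) := (D(h) − i·D(i•h))/2 and Anti D (h) := (D(h) + i·D(i•h))/2, for all h ∈ H: Lin (fderiv ℝ (S∘T) c) (h) = ∂S/∂z(T c)·Lin (fderiv ℝ T c) (h) + ∂S/∂z*(T c)·conj(Anti (fderiv ℝ T c) (h)), and Anti (fderiv ℝ (S∘T) c) (h) = ∂S/∂z(T c)·Anti (fderiv ℝ T c) (h) + ∂S/∂z*(T c)·conj(Lin (fderiv ℝ T c) (h)). -/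
/-- The ℂ-linear part (Fréchet Wirtinger derivative) of a continuous ℝ-linear
map `D : H → ℂ`. -/
noncomputable def linPart {H : Type*} [NormedAddCommGroup H]
    [InnerProductSpace ℂ H] (D : H →L[ℝ] ℂ) (h : H) : ℂ :=
  (D h - Complex.I * D (Complex.I • h)) / 2

/-- The conjugate-linear part (Fréchet conjugate Wirtinger derivative) of a
continuous ℝ-linear map `D : H → ℂ`. -/
noncomputable def antiPart {H : Type*} [NormedAddCommGroup H]
    [InnerProductSpace ℂ H] (D : H →L[ℝ] ℂ) (h : H) : ℂ :=
  (D h + Complex.I * D (Complex.I • h)) / 2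

/-- The scalar Wirtinger derivative `∂S/∂z` of `S : ℂ → ℂ` at `p`. -/
noncomputable def dz (S : ℂ → ℂ) (p : ℂ) : ℂ :=
  (fderiv ℝ S p 1 - Complex.I * fderiv ℝ S p Complex.I) / 2

/-- The scalar conjugate Wirtinger derivative `∂S/∂z*` of `S : ℂ → ℂ` at `p`. -/
noncomputable def dzStar (S : ℂ → ℂ) (p : ℂ) : ℂ :=
  (fderiv ℝ S p 1 + Complex.I * fderiv ℝ S p Complex.I) / 2

/-!
Every ℝ-linear map `D : ℂ → ℂ` has the form `z ↦ a z + b z̄` with `a = Lin D 1` and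
`b = Anti D 1`, and for `D = fderiv ℝ S p` these are `∂S/∂z (p)` and `∂S/∂z* (p)`. Composing
with `E = fderiv ℝ T c` and splitting `E h`, `E (i h)` into their parts gives both formulas by
the ordinary chain rule.
-/

open Complex ComplexConjugate

theorem ContinuousLinearMap.apply_eq_linPart_mul_add_antiPart_mul_conj (D : ℂ →L[ℝ] ℂ)
    (z : ℂ) : D z = linPart D 1 * z + antiPart D 1 * conj z := by
  obtain ⟨x, y, rfl⟩ : ∃ x y : ℝ, z = x + y * I := ⟨z.re, z.im, (re_add_im z).symm⟩
  have hD : D (x + y * I) = x * D 1 + y * D I := by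
    rw [show (x : ℂ) + y * I = x • (1 : ℂ) + y • I by simp [real_smul], map_add, map_smul,
      map_smul, real_smul, real_smul]
  rw [hD, linPart, antiPart, smul_eq_mul, mul_one, map_add, map_mul, conj_ofReal, conj_ofReal,
    conj_I]
  linear_combination (y : ℂ) * D I * I_sq

theorem linPart_comp {H : Type*} [NormedAddCommGroup H] [InnerProductSpace ℂ H]
    (D : ℂ →L[ℝ] ℂ) (E : H →L[ℝ] ℂ) (h : H) :
    linPart (D.comp E) h = linPart D 1 * linPart E h + antiPart D 1 * conj (antiPart E h) := by
  simp only [linPart, antiPart, ContinuousLinearMap.comp_apply,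
    D.apply_eq_linPart_mul_add_antiPart_mul_conj (E h),
    D.apply_eq_linPart_mul_add_antiPart_mul_conj (E (I • h))]
  simp only [map_div₀, map_add, map_mul, conj_I, map_ofNat]
  ring

theorem antiPart_comp {H : Type*} [NormedAddCommGroup H] [InnerProductSpace ℂ H]
    (D : ℂ →L[ℝ] ℂ) (E : H →L[ℝ] ℂ) (h : H) :
    antiPart (D.comp E) h = linPart D 1 * antiPart E h + antiPart D 1 * conj (linPart E h) := by
  simp only [antiPart, linPart, ContinuousLinearMap.comp_apply,
    D.apply_eq_linPart_mul_add_antiPart_mul_conj (E h),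
    D.apply_eq_linPart_mul_add_antiPart_mul_conj (E (I • h))]
  simp only [map_div₀, map_sub, map_mul, conj_I, map_ofNat]
  ring

theorem dz_eq_linPart_fderiv (S : ℂ → ℂ) (p : ℂ) : dz S p = linPart (fderiv ℝ S p) 1 := by
  rw [dz, linPart, smul_eq_mul, mul_one]

theorem dzStar_eq_antiPart_fderiv (S : ℂ → ℂ) (p : ℂ) :
    dzStar S p = antiPart (fderiv ℝ S p) 1 := by
  rw [dzStar, antiPart, smul_eq_mul, mul_one]

theorem wirtinger_chain_rule_general {H : Type*} [NormedAddCommGroup H]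
    [InnerProductSpace ℂ H] (T : H → ℂ) (S : ℂ → ℂ) (c : H)
    (hT : DifferentiableAt ℝ T c) (hS : DifferentiableAt ℝ S (T c)) :
    DifferentiableAt ℝ (S ∘ T) c ∧
      ∀ h : H,
        linPart (fderiv ℝ (S ∘ T) c) h
          = dz S (T c) * linPart (fderiv ℝ T c) h
            + dzStar S (T c) * (starRingEnd ℂ) (antiPart (fderiv ℝ T c) h) ∧
        antiPart (fderiv ℝ (S ∘ T) c) h
          = dz S (T c) * antiPart (fderiv ℝ T c) h
            + dzStar S (T c) * (starRingEnd ℂ) (linPart (fderiv ℝ T c) h) := by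
  refine ⟨hS.comp c hT, fun h => ?_⟩
  rw [fderiv_comp c hS hT, dz_eq_linPart_fderiv, dzStar_eq_antiPart_fderiv]
  exact ⟨linPart_comp _ _ h, antiPart_comp _ _ h⟩

/-- Chain rule for Wirtinger derivatives on a complex Hilbert space. -/
theorem wirtinger_chain_rule {H : Type*} [NormedAddCommGroup H]
    [InnerProductSpace ℂ H] [CompleteSpace H] (T : H → ℂ) (S : ℂ → ℂ) (c : H)
    (hT : DifferentiableAt ℝ T c) (hS : DifferentiableAt ℝ S (T c)) :
    DifferentiableAt ℝ (S ∘ T) c ∧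
      ∀ h : H,
        linPart (fderiv ℝ (S ∘ T) c) h
          = dz S (T c) * linPart (fderiv ℝ T c) h
            + dzStar S (T c) * (starRingEnd ℂ) (antiPart (fderiv ℝ T c) h) ∧
        antiPart (fderiv ℝ (S ∘ T) c) h
          = dz S (T c) * antiPart (fderiv ℝ T c) h
            + dzStar S (T c) * (starRingEnd ℂ) (linPart (fderiv ℝ T c) h) :=
  wirtinger_chain_rule_general T S c hT hS
end

section
/- The complex Gaussian function is a positive definite kernel: fix d ∈ ℕ and σ > 0, and define κ : ℂ^d × ℂ^d → ℂ by κ(z, w) := exp(−(Σ_{l=1}^{d} (z_l − conj(w_l))²)/σ²). Then (i) κ is Hermitian: conj(κ(z, w)) = κ(w, z) for all z, w ∈ ℂ^d; and (ii) for every N ∈ ℕ, every family of points z : Fin N → ℂ^d, and every family of coefficients c : Fin N → ℂ, the Gram sum Σ_{i,j} conj(c i)·(c j)·κ(z i, z j) is a nonnegative real number (its imaginary part is 0 and its real part is ≥ 0). -/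
/-!
Expanding the square, `κ(z, w) = f z * conj (f w) * exp (2 ⟪z, w⟫ / σ²)` with
`f z = exp (-(∑ l, z l ^ 2) / σ²)`. The Gram matrix of `⟪z, w⟫ = ∑ l, z l * conj (w l)` is
positive semidefinite, hence so are its entrywise powers (Schur product theorem) and, summing the
exponential series, its entrywise exponential. Multiplying entrywise by the rank-one matrix
`f (z i) * conj (f (z j))` keeps it positive semidefinite, by Schur once more.
-/

open scoped ComplexConjugate

/-- The complex Gaussian kernel on `ℂ^d` with parameter `σ`:
`κ(z, w) = exp(−(Σ_l (z_l − conj(w_l))²)/σ²)`. -/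
noncomputable def complexGaussianKernel (d : ℕ) (σ : ℝ) (z w : Fin d → ℂ) : ℂ :=
  Complex.exp (-(∑ l : Fin d, (z l - conj (w l)) ^ 2) / (σ : ℂ) ^ 2)

open scoped ComplexOrder Matrix

namespace Matrix

variable {ι : Type*} [Fintype ι]

theorem PosSemidef.map_pow {𝕜 : Type*} [RCLike 𝕜] {A : Matrix ι ι 𝕜} (hA : A.PosSemidef)
    (n : ℕ) : (A.map (· ^ n)).PosSemidef := by
  induction n with
  | zero =>
    convert posSemidef_vecMulVec_self_star (1 : ι → 𝕜) using 1
    ext i j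
    simp [vecMulVec_apply]
  | succ n ih =>
    convert ih.hadamard hA using 1
    ext i j
    simp [pow_succ]

theorem PosSemidef.map_exp {A : Matrix ι ι ℂ} (hA : A.PosSemidef) :
    (A.map Complex.exp).PosSemidef := by
  rw [posSemidef_iff_dotProduct_mulVec]
  refine ⟨?_, fun x => ?_⟩
  · ext i j
    simp [← Complex.exp_conj, ← hA.isHermitian.apply i j]
  have hexp (z : ℂ) : HasSum (fun n : ℕ => (n.factorial : ℂ)⁻¹ * z ^ n) (Complex.exp z) := by
    rw [Complex.exp_eq_exp_ℂ]
    exact NormedSpace.exp_series_hasSum_exp' (𝕂 := ℂ) z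
  have hquad : HasSum (fun n : ℕ => (n.factorial : ℂ)⁻¹ * (star x ⬝ᵥ (A.map (· ^ n) *ᵥ x)))
      (star x ⬝ᵥ (A.map Complex.exp *ᵥ x)) := by
    simp only [dotProduct, mulVec, map_apply, Finset.mul_sum]
    exact hasSum_sum fun i _ => hasSum_sum fun j _ => by
      simpa only [mul_comm, mul_left_comm, mul_assoc] using (hexp (A i j)).mul_left (star x i * x j)
  refine hquad.nonneg fun n => mul_nonneg (by positivity) ?_
  exact (hA.map_pow n).dotProduct_mulVec_nonneg x

end Matrix

theorem conj_complexGaussianKernel (d : ℕ) (σ : ℝ) (z w : Fin d → ℂ) :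
    conj (complexGaussianKernel d σ z w) = complexGaussianKernel d σ w z := by
  simp only [complexGaussianKernel, ← Complex.exp_conj, map_div₀, map_neg, map_sum, map_pow,
    map_sub, Complex.conj_conj, Complex.conj_ofReal]
  congr 3
  exact Finset.sum_congr rfl fun l _ => by ring

theorem complexGaussianKernel_eq (d : ℕ) (σ : ℝ) (z w : Fin d → ℂ) :
    complexGaussianKernel d σ z w =
      Complex.exp (-(∑ l, z l ^ 2) / (σ : ℂ) ^ 2) *
        conj (Complex.exp (-(∑ l, w l ^ 2) / (σ : ℂ) ^ 2)) *
        Complex.exp (((2 / σ ^ 2 : ℝ) : ℂ) * ∑ l, z l * conj (w l)) := by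
  simp only [complexGaussianKernel, ← Complex.exp_conj, ← Complex.exp_add, map_div₀, map_neg,
    map_sum, map_pow, Complex.conj_ofReal]
  congr 1
  simp only [sub_sq, mul_assoc, Finset.sum_add_distrib, Finset.sum_sub_distrib, ← Finset.mul_sum]
  push_cast
  ring

theorem posSemidef_complexGaussianKernel {ι : Type*} [Fintype ι] (d : ℕ) (σ : ℝ)
    (z : ι → Fin d → ℂ) :
    (Matrix.of fun i j => complexGaussianKernel d σ (z i) (z j)).PosSemidef := by
  set f : ι → ℂ := fun i => Complex.exp (-(∑ l, z i l ^ 2) / (σ : ℂ) ^ 2)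
  have hinner : (((2 / σ ^ 2 : ℝ) : ℂ) • (Matrix.of z * (Matrix.of z)ᴴ)).PosSemidef :=
    (Matrix.posSemidef_self_mul_conjTranspose _).smul (Complex.zero_le_real.mpr (by positivity))
  have hfactor : (Matrix.of fun i j => complexGaussianKernel d σ (z i) (z j)) =
      Matrix.vecMulVec f (star f) ⊙
        (((2 / σ ^ 2 : ℝ) : ℂ) • (Matrix.of z * (Matrix.of z)ᴴ)).map Complex.exp := by
    ext i j
    simp [complexGaussianKernel_eq, Matrix.vecMulVec_apply, Matrix.mul_apply, f]
  rw [hfactor]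
  exact (Matrix.posSemidef_vecMulVec_self_star f).hadamard hinner.map_exp

theorem complexGaussianKernel_positive_definite_general (d : ℕ) (σ : ℝ) :
    (∀ z w : Fin d → ℂ,
        conj (complexGaussianKernel d σ z w) = complexGaussianKernel d σ w z) ∧
      ∀ (N : ℕ) (z : Fin N → Fin d → ℂ) (c : Fin N → ℂ),
        (∑ i : Fin N, ∑ j : Fin N,
            conj (c i) * c j * complexGaussianKernel d σ (z i) (z j)).im = 0 ∧
        0 ≤ (∑ i : Fin N, ∑ j : Fin N,
            conj (c i) * c j * complexGaussianKernel d σ (z i) (z j)).re := by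
  refine ⟨conj_complexGaussianKernel d σ, fun N z c => ?_⟩
  have hquad : star c ⬝ᵥ (Matrix.of (fun i j => complexGaussianKernel d σ (z i) (z j)) *ᵥ c) =
      ∑ i, ∑ j, conj (c i) * c j * complexGaussianKernel d σ (z i) (z j) := by
    simp only [dotProduct, Matrix.mulVec, Matrix.of_apply, Finset.mul_sum, Pi.star_apply,
      Complex.star_def]
    exact Finset.sum_congr rfl fun i _ => Finset.sum_congr rfl fun j _ => by ring
  have hnonneg := (posSemidef_complexGaussianKernel d σ z).dotProduct_mulVec_nonneg c
  rw [hquad, Complex.nonneg_iff] at hnonneg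
  exact ⟨hnonneg.2.symm, hnonneg.1⟩

/-- The complex Gaussian function is a positive definite kernel: it is
Hermitian and all its Gram sums are nonnegative real numbers. -/
theorem complexGaussianKernel_positive_definite (d : ℕ) (σ : ℝ) (hσ : 0 < σ) :
    (∀ z w : Fin d → ℂ,
        conj (complexGaussianKernel d σ z w) = complexGaussianKernel d σ w z) ∧
      ∀ (N : ℕ) (z : Fin N → Fin d → ℂ) (c : Fin N → ℂ),
        (∑ i : Fin N, ∑ j : Fin N,
            conj (c i) * c j * complexGaussianKernel d σ (z i) (z j)).im = 0 ∧
        0 ≤ (∑ i : Fin N, ∑ j : Fin N,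
            conj (c i) * c j * complexGaussianKernel d σ (z i) (z j)).re :=
  complexGaussianKernel_positive_definite_general d σ
end

section
/- Closed form of the complexified-kernel LMS (CKLMS1) output: let 𝓗 be a real inner product space, and on 𝓗 × 𝓗 define B((f₁,f₂),(g₁,g₂)) := (⟨f₁,g₁⟩ + ⟨f₂,g₂⟩) + i·(⟨f₂,g₁⟩ − ⟨f₁,g₂⟩) and the complex action (a + b·i) • (f₁,f₂) := (a f₁ − b f₂, b f₁ + a f₂). Let μ ∈ ℝ, ψ : ℕ → 𝓗, d : ℕ → ℂ, and set φ n := (ψ n, ψ n) ∈ 𝓗 × 𝓗. Define recursively w 0 := 0 and, for n ≥ 1, e n := d n − B(φ n, w (n−1)) and w n := w (n−1) + ((μ : ℂ) · conj (e n)) • (φ n). Then for every n ≥ 1 the filter output satisfies B(φ n, w (n−1)) = 2μ · Σ_{k=1}^{n−1} (Re (e k)) · ⟨ψ n, ψ k⟩ + 2μ · i · Σ_{k=1}^{n−1} (Im (e k)) · ⟨ψ n, ψ k⟩, i.e., B(φ n, w (n−1)) = 2μ · Σ_{k=1}^{n−1} (e k) · (⟨ψ n, ψ k⟩ : ℂ).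 -/
open scoped RealInnerProductSpace ComplexConjugate

/-- The complexified inner product on `𝓗 × 𝓗` for a real inner product space
`𝓗`: `B((f₁,f₂),(g₁,g₂)) = (⟨f₁,g₁⟩ + ⟨f₂,g₂⟩) + i(⟨f₂,g₁⟩ − ⟨f₁,g₂⟩)`. -/
noncomputable def complexifiedInner {𝓗 : Type*} [NormedAddCommGroup 𝓗]
    [InnerProductSpace ℝ 𝓗] (x y : 𝓗 × 𝓗) : ℂ :=
  ((⟪x.1, y.1⟫ + ⟪x.2, y.2⟫ : ℝ) : ℂ) +
    Complex.I * ((⟪x.2, y.1⟫ - ⟪x.1, y.2⟫ : ℝ) : ℂ)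

/-- The complex scalar action on the complexification `𝓗 × 𝓗`:
`(a + b·i) • (f₁, f₂) = (a f₁ − b f₂, b f₁ + a f₂)`. -/
noncomputable def complexifiedSMul {𝓗 : Type*} [NormedAddCommGroup 𝓗]
    [InnerProductSpace ℝ 𝓗] (c : ℂ) (x : 𝓗 × 𝓗) : 𝓗 × 𝓗 :=
  (c.re • x.1 - c.im • x.2, c.im • x.1 + c.re • x.2)

/-!
Unrolling the recursion gives `w (n - 1) = ∑_{k=1}^{n-1} (μ · conj (e k)) • φ k`. The form `B` is
additive in its second argument, and on the diagonal vectors `φ k = (ψ k, ψ k)` it reduces to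
`B(φ n, c • φ k) = 2 · conj c · ⟨ψ n, ψ k⟩`: the two imaginary cross terms `⟨ψ n, ψ k⟩` cancel.
Hence each summand contributes `2 μ · e k · ⟨ψ n, ψ k⟩`.
-/

theorem eq_sum_Icc_of_eq_pred_add {M : Type*} [AddCommMonoid M] {w v : ℕ → M} (hw0 : w 0 = 0)
    (hw : ∀ n, 1 ≤ n → w n = w (n - 1) + v n) (n : ℕ) : w n = ∑ k ∈ Finset.Icc 1 n, v k := by
  induction n with
  | zero => simp [hw0]
  | succ n ih =>
    rw [hw _ (Nat.le_add_left 1 n), Nat.add_sub_cancel, ih,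
      Finset.sum_Icc_succ_top (Nat.le_add_left 1 n)]

theorem Complex.sum_mul_ofReal {ι : Type*} (s : Finset ι) (z : ι → ℂ) (r : ι → ℝ) :
    ∑ k ∈ s, z k * (r k : ℂ)
      = ((∑ k ∈ s, (z k).re * r k : ℝ) : ℂ) + I * ((∑ k ∈ s, (z k).im * r k : ℝ) : ℂ) := by
  apply Complex.ext <;> simp [Complex.re_sum, Complex.im_sum]

section Complexification

variable {𝓗 : Type*} [NormedAddCommGroup 𝓗] [InnerProductSpace ℝ 𝓗]

theorem complexifiedInner_add_right (x y z : 𝓗 × 𝓗) :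
    complexifiedInner x (y + z) = complexifiedInner x y + complexifiedInner x z := by
  simp only [complexifiedInner, Prod.fst_add, Prod.snd_add, inner_add_right]
  push_cast
  ring

theorem complexifiedInner_sum_right {ι : Type*} (x : 𝓗 × 𝓗) (s : Finset ι) (y : ι → 𝓗 × 𝓗) :
    complexifiedInner x (∑ k ∈ s, y k) = ∑ k ∈ s, complexifiedInner x (y k) :=
  map_sum (AddMonoidHom.mk' (complexifiedInner x) (complexifiedInner_add_right x)) y s

theorem complexifiedInner_diag_smul_diag (a b : 𝓗) (c : ℂ) :
    complexifiedInner (a, a) (complexifiedSMul c (b, b)) = 2 * conj c * (⟪a, b⟫ : ℂ) := by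
  have conj_eq : conj c = c.re - c.im * Complex.I := by
    apply Complex.ext <;> simp
  simp only [complexifiedInner, complexifiedSMul, inner_sub_right, inner_add_right,
    inner_smul_right, conj_eq]
  push_cast
  ring

end Complexification

theorem cklms1_closed_form_general {𝓗 : Type*} [NormedAddCommGroup 𝓗]
    [InnerProductSpace ℝ 𝓗] (μ : ℝ) (ψ : ℕ → 𝓗)
    (w : ℕ → 𝓗 × 𝓗) (e : ℕ → ℂ)
    (hw0 : w 0 = 0)
    (hw : ∀ n : ℕ, 1 ≤ n →
      w n = w (n - 1) + complexifiedSMul ((μ : ℂ) * conj (e n)) (ψ n, ψ n)) :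
    ∀ n : ℕ, 1 ≤ n →
      complexifiedInner (ψ n, ψ n) (w (n - 1))
        = ((2 * μ * ∑ k ∈ Finset.Icc 1 (n - 1), (e k).re * ⟪ψ n, ψ k⟫ : ℝ) : ℂ)
          + ((2 * μ : ℝ) : ℂ) * Complex.I
            * ((∑ k ∈ Finset.Icc 1 (n - 1), (e k).im * ⟪ψ n, ψ k⟫ : ℝ) : ℂ) ∧
      complexifiedInner (ψ n, ψ n) (w (n - 1))
        = ((2 * μ : ℝ) : ℂ)
          * ∑ k ∈ Finset.Icc 1 (n - 1), e k * ((⟪ψ n, ψ k⟫ : ℝ) : ℂ) := by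
  intro n _
  have closed_form : complexifiedInner (ψ n, ψ n) (w (n - 1))
      = ((2 * μ : ℝ) : ℂ) * ∑ k ∈ Finset.Icc 1 (n - 1), e k * ((⟪ψ n, ψ k⟫ : ℝ) : ℂ) := by
    rw [eq_sum_Icc_of_eq_pred_add hw0 hw, complexifiedInner_sum_right, Finset.mul_sum]
    refine Finset.sum_congr rfl fun k _ => ?_
    rw [complexifiedInner_diag_smul_diag, map_mul, Complex.conj_ofReal, Complex.conj_conj]
    push_cast
    ring
  refine ⟨?_, closed_form⟩
  rw [closed_form, Complex.sum_mul_ofReal]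
  push_cast
  ring

/-- Closed form of the complexified-kernel LMS (CKLMS1) output: with
`φ n = (ψ n, ψ n)`, `w 0 = 0`, `e n = d n − B(φ n, w(n−1))` and
`w n = w(n−1) + (μ·conj(e n)) • φ n`, the filter output satisfies
`B(φ n, w(n−1)) = 2μ Σ Re(e k)⟨ψ n, ψ k⟩ + 2μi Σ Im(e k)⟨ψ n, ψ k⟩
               = 2μ Σ e k ⟨ψ n, ψ k⟩`. -/
theorem cklms1_closed_form {𝓗 : Type*} [NormedAddCommGroup 𝓗]
    [InnerProductSpace ℝ 𝓗] (μ : ℝ) (ψ : ℕ → 𝓗) (d : ℕ → ℂ)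
    (w : ℕ → 𝓗 × 𝓗) (e : ℕ → ℂ)
    (hw0 : w 0 = 0)
    (he : ∀ n : ℕ, 1 ≤ n → e n = d n - complexifiedInner (ψ n, ψ n) (w (n - 1)))
    (hw : ∀ n : ℕ, 1 ≤ n →
      w n = w (n - 1) + complexifiedSMul ((μ : ℂ) * conj (e n)) (ψ n, ψ n)) :
    ∀ n : ℕ, 1 ≤ n →
      complexifiedInner (ψ n, ψ n) (w (n - 1))
        = ((2 * μ * ∑ k ∈ Finset.Icc 1 (n - 1), (e k).re * ⟪ψ n, ψ k⟫ : ℝ) : ℂ)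
          + ((2 * μ : ℝ) : ℂ) * Complex.I
            * ((∑ k ∈ Finset.Icc 1 (n - 1), (e k).im * ⟪ψ n, ψ k⟫ : ℝ) : ℂ) ∧
      complexifiedInner (ψ n, ψ n) (w (n - 1))
        = ((2 * μ : ℝ) : ℂ)
          * ∑ k ∈ Finset.Icc 1 (n - 1), e k * ((⟪ψ n, ψ k⟫ : ℝ) : ℂ) :=
  cklms1_closed_form_general μ ψ w e hw0 hw
end
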